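/- arXiv:1711.02715 — 2 statements merged into one kernel-verified Lean document; each statement's English description precedes it below -/
import Mathlib

section
/- If p(z=1 | x, y=1) = p(z=1 | y=1) (selected completely at random assumption) and p(z=1 | x, y=0) = 0 (only positive examples are labeled), then p(y=1 | x) = p(z=1 | x) / p(z=1 | y=1), provided p(z=1 | y=1) > 0. -/
open MeasureTheory

/-- Conditional probability `p(A | B)` as a real number. -/
noncomputable def cp {Ω : Type*} [MeasurableSpace Ω] (μ : Measure Ω) (A B : Set Ω) : ℝ :=
  (μ (A ∩ B)).toReal / (μ B).toReal

section CondProb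

variable {Ω : Type*} [MeasurableSpace Ω] (μ : Measure Ω) [IsFiniteMeasure μ] (A B : Set Ω)

theorem cp_eq_zero_iff : cp μ A B = 0 ↔ μ (A ∩ B) = 0 := by
  have hB : μ B = 0 → μ (A ∩ B) = 0 := measure_mono_null Set.inter_subset_right
  simp only [cp, div_eq_zero_iff, ENNReal.toReal_eq_zero_iff, measure_ne_top, or_false]
  exact ⟨fun h => h.elim id hB, Or.inl⟩

/-- Holds also when `μ B = 0`: then both sides vanish, although `cp μ A B` is a junk `0`. -/
theorem toReal_measure_inter_eq_cp_mul : (μ (A ∩ B)).toReal = cp μ A B * (μ B).toReal := by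
  by_cases hB : μ B = 0
  · simp [hB, measure_mono_null Set.inter_subset_right hB]
  · have : (μ B).toReal ≠ 0 := ENNReal.toReal_ne_zero.mpr ⟨hB, measure_ne_top μ B⟩
    rw [cp, div_mul_cancel₀ _ this]

end CondProb

theorem measure_inter_inter_eq_of_inter_compl_null {Ω : Type*} [MeasurableSpace Ω]
    {μ : Measure Ω} {A B C : Set Ω} (h : μ (A ∩ (B ∩ Cᶜ)) = 0) :
    μ (A ∩ (B ∩ C)) = μ (A ∩ B) := by
  have hdiff : A ∩ (B ∩ C) = (A ∩ B) \ (A ∩ (B ∩ Cᶜ)) := by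
    ext ω; by_cases hC : ω ∈ C <;> simp [hC]
  rw [hdiff, measure_sdiff_null h]

theorem stmt_0_general {Ω : Type*} [MeasurableSpace Ω] (μ : Measure Ω) [IsProbabilityMeasure μ]
    (X Y Z : Set Ω)
    (hSCAR : cp μ Z (X ∩ Y) = cp μ Z Y)
    (hPU : cp μ Z (X ∩ Yᶜ) = 0)
    (hpos : 0 < cp μ Z Y) :
    cp μ Y X = cp μ Z X / cp μ Z Y := by
  have hZX : (μ (Z ∩ X)).toReal = cp μ Z Y * (μ (X ∩ Y)).toReal := by
    rw [← measure_inter_inter_eq_of_inter_compl_null ((cp_eq_zero_iff μ _ _).mp hPU),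
      toReal_measure_inter_eq_cp_mul, hSCAR]
  rw [cp, cp, hZX, Set.inter_comm Y X]
  field_simp

/-- Elkan–Noto Lemma 1: under "selected completely at random" and "only positives
are labeled", `p(y=1|x) = p(z=1|x) / p(z=1|y=1)`. -/
theorem stmt_0 {Ω : Type*} [MeasurableSpace Ω] (μ : Measure Ω) [IsProbabilityMeasure μ]
    (X Y Z : Set Ω)
    (hX : μ X ≠ 0) (hY : μ Y ≠ 0) (hXY : μ (X ∩ Y) ≠ 0) (hXYc : μ (X ∩ Yᶜ) ≠ 0)
    (hSCAR : cp μ Z (X ∩ Y) = cp μ Z Y)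
    (hPU : cp μ Z (X ∩ Yᶜ) = 0)
    (hpos : 0 < cp μ Z Y) :
    cp μ Y X = cp μ Z X / cp μ Z Y :=
  stmt_0_general μ X Y Z hSCAR hPU hpos
end

section
/- Under the PU assumptions p(z=1 | x, y=0) = 0 and p(z=1 | x, y=1) = c ∈ (0,1], the classifier g(x) := p(z=1|x)/c satisfies: g(x) > 1/2 if and only if p(y=1|x) > 1/2. In other words, thresholding the rescaled discovery probability at 1/2 yields the Bayes-optimal decision for the hidden label y. -/
/-!
Since only positives are labelled, `Z ∩ X` and `Z ∩ (X ∩ Y)` differ by a null set, so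
`p(z=1 | x) = p(z=1 | x, y=1) p(y=1 | x) = c p(y=1 | x)`: the rescaled discovery probability is
exactly the posterior of the hidden label, and thresholding either at 1/2 gives the same decision.
-/

open MeasureTheory

namespace PU

variable {Ω : Type*} [MeasurableSpace Ω] {μ : Measure Ω} [IsFiniteMeasure μ]

-- Holds without assuming `μ B ≠ 0`: then both sides vanish, the right one because `x / 0 = 0`.
lemma measureReal_inter_eq_cp_mul (A B : Set Ω) : μ.real (A ∩ B) = cp μ A B * μ.real B := by
  rcases eq_or_ne (μ.real B) 0 with hB | hB
  · rw [hB, mul_zero]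
    exact le_antisymm (hB ▸ measureReal_mono Set.inter_subset_right) measureReal_nonneg
  · rw [cp, ← measureReal_def, ← measureReal_def, div_mul_cancel₀ _ hB]

lemma measure_inter_eq_of_cp_inter_compl_eq_zero {A B C : Set Ω} (h : cp μ A (B ∩ Cᶜ) = 0) :
    μ (A ∩ (B ∩ C)) = μ (A ∩ B) := by
  have hnull : μ (A ∩ (B ∩ Cᶜ)) = 0 := by
    rw [← measureReal_eq_zero_iff, measureReal_inter_eq_cp_mul, h, zero_mul]
  rw [← Set.inter_assoc]
  exact measure_inter_conull' (by rwa [Set.sdiff_eq, Set.inter_assoc])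

lemma cp_eq_mul_cp_of_cp_inter_compl_eq_zero {X Y Z : Set Ω} {c : ℝ}
    (hpos : cp μ Z (X ∩ Y) = c) (hneg : cp μ Z (X ∩ Yᶜ) = 0) :
    cp μ Z X = c * cp μ Y X := by
  have hZX : μ.real (Z ∩ X) = c * μ.real (X ∩ Y) := by
    rw [measureReal_def, ← measure_inter_eq_of_cp_inter_compl_eq_zero hneg, ← measureReal_def,
      measureReal_inter_eq_cp_mul, hpos]
  rw [cp, ← measureReal_def, hZX, cp, Set.inter_comm Y X, measureReal_def, mul_div_assoc]

end PU

theorem stmt_2_general {Ω : Type*} [MeasurableSpace Ω] (μ : Measure Ω) [IsProbabilityMeasure μ]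
    (X Y Z : Set Ω) (c : ℝ)
    (hc0 : 0 < c)
    (hSCAR : cp μ Z (X ∩ Y) = c)
    (hPU : cp μ Z (X ∩ Yᶜ) = 0) :
    (cp μ Z X / c > 1 / 2 ↔ cp μ Y X > 1 / 2) := by
  rw [PU.cp_eq_mul_cp_of_cp_inter_compl_eq_zero hSCAR hPU, mul_div_cancel_left₀ _ hc0.ne']

/-- Thresholding the rescaled discovery probability `g(x) = p(z=1|x)/c` at 1/2 is
equivalent to thresholding the true posterior `p(y=1|x)` at 1/2. -/
theorem stmt_2 {Ω : Type*} [MeasurableSpace Ω] (μ : Measure Ω) [IsProbabilityMeasure μ]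
    (X Y Z : Set Ω) (c : ℝ)
    (hX : μ X ≠ 0) (hY : μ Y ≠ 0) (hXY : μ (X ∩ Y) ≠ 0) (hXYc : μ (X ∩ Yᶜ) ≠ 0)
    (hc0 : 0 < c) (hc1 : c ≤ 1)
    (hSCAR : cp μ Z (X ∩ Y) = c) (hcdef : cp μ Z Y = c)
    (hPU : cp μ Z (X ∩ Yᶜ) = 0) :
    (cp μ Z X / c > 1 / 2 ↔ cp μ Y X > 1 / 2) :=
  stmt_2_general μ X Y Z c hc0 hSCAR hPU
end
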